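/- arXiv:2304.11426 — 2 statements merged into one kernel-verified Lean document; each statement's English description precedes it below -/
import Mathlib

section
/- Stability of the Volterra integral system with respect to right-hand-side perturbations (Theorem 1): Let ε > 0, let B(t, τ) be C¹ in t, F ∈ C¹ with F(0) = 0 and sup_{t≥0}‖F'(t)‖ ≤ ε. Write B₀(t) = B(t, t) and C(t, τ) = ∂_t B(t, τ). If for all 0 ≤ t' < t, Λ(B₀(t)) + (1/(t−t'))∫_{t'}^{t} ψ*(τ) dτ < 0 where ψ*(s) = ∫₀ˢ ‖C(s,τ)‖ dτ + ‖F'(s)‖/ε, then every solution X of X(t) = ∫₀ᵗ B(t,τ)X(τ)dτ + F(t) satisfies ‖X(t)‖ ≤ ε for all t ≥ 0. -/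
open scoped Topology
open Filter Set

noncomputable def logNorm {E : Type*} [NormedAddCommGroup E] [NormedSpace ℝ E]
    (K : E →L[ℝ] E) : ℝ :=
  sInf ((fun h : ℝ => (‖ContinuousLinearMap.id ℝ E + h • K‖ - 1) / h) '' Set.Ioi 0)

noncomputable def matNorm {n : ℕ} (A : Matrix (Fin n) (Fin n) ℝ) : ℝ :=
  ‖LinearMap.toContinuousLinearMap A.mulVecLin‖

noncomputable def matLogNorm {n : ℕ} (A : Matrix (Fin n) (Fin n) ℝ) : ℝ :=
  logNorm (LinearMap.toContinuousLinearMap A.mulVecLin)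

/-!
Suppose `‖X t‖ > ε` and let `M = ‖X w‖` be the maximum of `‖X‖` on `[0, t]`. Differentiating the
equation gives the Cauchy problem `X' = B(x,x) X + ∫₀ˣ C(x,τ) X(τ) dτ + F'`, so the right Dini
derivative of `‖X‖` at `x` is at most `Λ(B(x,x)) ‖X x‖ + M ∫₀ˣ ‖C(x,τ)‖ dτ + ‖F'(x)‖`. Shrinking the
interval `[t', x]` in the averaged hypothesis gives `Λ(B(x,x)) + ψ*(x) ≤ 0`, and as `M > ε` the Dini
derivative is then at most `-Λ(B(x,x)) (M - ‖X x‖) ≤ L (M - ‖X x‖)`, where `L` bounds `‖B(x,x)‖` on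
`[0, t]`. Since `X 0 = 0`, comparison with the barrier `M - (M/2) e^{-(L+1)x}` keeps `‖X‖ < M` on
`[0, t]`, contradicting `‖X w‖ = M`.
-/

open MeasureTheory Function
open scoped Matrix

section LogNorm

variable {E : Type*} [NormedAddCommGroup E] [NormedSpace ℝ E]

noncomputable def logNormQuot (K : E →L[ℝ] E) (h : ℝ) : ℝ :=
  (‖ContinuousLinearMap.id ℝ E + h • K‖ - 1) / h

theorem logNormQuot_monotoneOn [Nontrivial E] (K : E →L[ℝ] E) :
    MonotoneOn (logNormQuot K) (Ioi 0) := by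
  set I := ContinuousLinearMap.id ℝ E
  have hconv : ConvexOn ℝ univ fun h : ℝ => ‖I + h • K‖ := by
    refine ⟨convex_univ, fun a _ b _ s t hs ht hst => ?_⟩
    calc ‖I + (s • a + t • b) • K‖ = ‖s • (I + a • K) + t • (I + b • K)‖ := by
          rw [smul_add, smul_add, add_add_add_comm, ← add_smul, hst, one_smul, smul_smul,
            smul_smul, ← add_smul, smul_eq_mul, smul_eq_mul]
      _ ≤ s * ‖I + a • K‖ + t * ‖I + b • K‖ := by
          refine (norm_add_le _ _).trans ?_
          rw [norm_smul, norm_smul, Real.norm_of_nonneg hs, Real.norm_of_nonneg ht]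
  intro h hh h' hh' hle
  have := hconv.secant_mono (a := 0) trivial trivial trivial (ne_of_gt hh) (ne_of_gt hh') hle
  simpa [logNormQuot, I] using this

theorem neg_norm_le_logNormQuot [Nontrivial E] (K : E →L[ℝ] E) {h : ℝ} (hh : 0 < h) :
    -‖K‖ ≤ logNormQuot K h := by
  have : 1 - h * ‖K‖ ≤ ‖ContinuousLinearMap.id ℝ E + h • K‖ := by
    have := norm_sub_norm_le (ContinuousLinearMap.id ℝ E) (-(h • K))
    rw [ContinuousLinearMap.norm_id, norm_neg, norm_smul, Real.norm_of_nonneg hh.le,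
      sub_neg_eq_add] at this
    exact this
  rw [logNormQuot, le_div_iff₀ hh]
  linarith

theorem bddBelow_logNormQuot [Nontrivial E] (K : E →L[ℝ] E) :
    BddBelow (logNormQuot K '' Ioi 0) :=
  ⟨-‖K‖, by rintro _ ⟨h, hh, rfl⟩; exact neg_norm_le_logNormQuot K hh⟩

theorem neg_norm_le_logNorm [Nontrivial E] (K : E →L[ℝ] E) : -‖K‖ ≤ logNorm K :=
  le_csInf (nonempty_Ioi.image _) (by rintro _ ⟨h, hh, rfl⟩; exact neg_norm_le_logNormQuot K hh)

theorem exists_logNormQuot_lt [Nontrivial E] (K : E →L[ℝ] E) {r : ℝ} (hr : logNorm K < r) :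
    ∃ h, 0 < h ∧ logNormQuot K h < r := by
  obtain ⟨_, ⟨h, hh, rfl⟩, hlt⟩ :=
    (csInf_lt_iff (bddBelow_logNormQuot K) (nonempty_Ioi.image _)).1 hr
  exact ⟨h, hh, hlt⟩

theorem norm_add_smul_apply_le (K : E →L[ℝ] E) (v : E) {h : ℝ} (hh : 0 < h) :
    ‖v + h • K v‖ ≤ (1 + h * logNormQuot K h) * ‖v‖ := by
  have : 1 + h * logNormQuot K h = ‖ContinuousLinearMap.id ℝ E + h • K‖ := by
    rw [logNormQuot]; field_simp; ring
  rw [this]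
  exact (ContinuousLinearMap.id ℝ E + h • K).le_opNorm v

theorem eventually_slope_norm_lt [Nontrivial E] {f : ℝ → E} {v : E} {x : ℝ}
    (hf : HasDerivWithinAt f v (Ici x) x) (K : E →L[ℝ] E) {r : ℝ}
    (hr : logNorm K * ‖f x‖ + ‖v - K (f x)‖ < r) :
    ∀ᶠ z in 𝓝[>] x, slope (fun s => ‖f s‖) x z < r := by
  set d := r - (logNorm K * ‖f x‖ + ‖v - K (f x)‖)
  have hd : 0 < d := sub_pos.2 hr
  obtain ⟨h₀, hh₀, hq⟩ : ∃ h₀, 0 < h₀ ∧ logNormQuot K h₀ * ‖f x‖ < logNorm K * ‖f x‖ + d / 2 := by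
    rcases (norm_nonneg (f x)).eq_or_lt with h0 | h0
    · exact ⟨1, one_pos, by rw [← h0]; linarith⟩
    · obtain ⟨h₀, hh₀, hlt⟩ := exists_logNormQuot_lt K
        (lt_add_of_pos_right (logNorm K) (div_pos (half_pos hd) h0))
      refine ⟨h₀, hh₀, ?_⟩
      calc logNormQuot K h₀ * ‖f x‖ < (logNorm K + d / 2 / ‖f x‖) * ‖f x‖ :=
            mul_lt_mul_of_pos_right hlt h0
        _ = logNorm K * ‖f x‖ + d / 2 := by field_simp
  have hslope : Tendsto (fun z => ‖slope f x z - K (f x)‖) (𝓝[>] x) (𝓝 ‖v - K (f x)‖) :=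
    (((hasDerivWithinAt_iff_tendsto_slope' (lt_irrefl x)).1 hf.Ioi_of_Ici).sub_const _).norm
  filter_upwards [Ioc_mem_nhdsGT (lt_add_of_pos_right x hh₀),
    hslope.eventually_lt_const (lt_add_of_pos_right _ (half_pos hd))] with z hz hsz
  have hzx : 0 < z - x := sub_pos.2 hz.1
  have hq' : logNormQuot K (z - x) * ‖f x‖ ≤ logNormQuot K h₀ * ‖f x‖ :=
    mul_le_mul_of_nonneg_right (logNormQuot_monotoneOn K hzx hh₀ (by linarith [hz.2]))
      (norm_nonneg _)
  have hfz : f z = (f x + (z - x) • K (f x)) + (z - x) • (slope f x z - K (f x)) := by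
    rw [smul_sub, sub_smul_slope, vsub_eq_sub]; abel
  have hnorm : ‖f z‖ ≤ (1 + (z - x) * logNormQuot K (z - x)) * ‖f x‖
      + (z - x) * ‖slope f x z - K (f x)‖ := by
    rw [hfz]
    refine (norm_add_le _ _).trans (add_le_add (norm_add_smul_apply_le K (f x) hzx) ?_)
    rw [norm_smul, Real.norm_of_nonneg hzx.le]
  rw [slope_def_field, div_lt_iff₀ hzx]
  nlinarith

end LogNorm

section Calculus

variable {E : Type*} [NormedAddCommGroup E] [NormedSpace ℝ E]

theorem hasDerivWithinAt_Ici_of_norm_le {f : ℝ → E} {v : E} {x : ℝ}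
    (h : ∀ η > 0, ∃ δ > 0, ∀ z, x ≤ z → z < x + δ →
      ‖f z - f x - (z - x) • v‖ ≤ η * (z - x)) :
    HasDerivWithinAt f v (Ici x) x := by
  rw [hasDerivWithinAt_iff_isLittleO, Asymptotics.isLittleO_iff]
  intro η hη
  obtain ⟨δ, hδ, hfz⟩ := h η hη
  filter_upwards [Ico_mem_nhdsGE (lt_add_of_pos_right x hδ)] with z hz
  rw [Real.norm_of_nonneg (sub_nonneg.2 hz.1)]
  exact hfz z hz.1 hz.2

theorem norm_sub_sub_smul_le_of_hasDerivAt {f f' : ℝ → E} {a b C : ℝ} (hab : a ≤ b)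
    (hf : ∀ u ∈ Icc a b, HasDerivAt f (f' u) u) (hf' : ∀ u ∈ Ico a b, ‖f' u - f' a‖ ≤ C) :
    ‖f b - f a - (b - a) • f' a‖ ≤ C * (b - a) := by
  have hg : ∀ u ∈ Icc a b, HasDerivAt (fun u => f u - (u - a) • f' a) (f' u - f' a) u :=
    fun u hu => ((hf u hu).sub (((hasDerivAt_id u).sub_const a).smul_const (f' a))).congr_deriv
      (by simp)
  simpa [sub_sub, add_comm] using norm_image_sub_le_of_norm_deriv_right_le_segment
    (fun u hu => (hg u hu).continuousAt.continuousWithinAt)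
    (fun u hu => (hg u (Ico_subset_Icc_self hu)).hasDerivWithinAt) hf' b ⟨hab, le_rfl⟩

end Calculus

theorem add_le_zero_of_forall_average_lt {φ : ℝ → ℝ} {a x c : ℝ} (hφ : ContinuousOn φ (Ioi a))
    (hax : a < x) (h : ∀ t' ∈ Ioo a x, c + 1 / (x - t') * ∫ τ in t'..x, φ τ < 0) :
    c + φ x ≤ 0 := by
  have hderiv : HasDerivAt (fun s => ∫ τ in x..s, φ τ) (φ x) x :=
    intervalIntegral.integral_hasDerivAt_right IntervalIntegrable.refl
      (hφ.stronglyMeasurableAtFilter isOpen_Ioi x hax) (hφ.continuousAt (Ioi_mem_nhds hax))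
  refine le_of_tendsto (((hasDerivAt_iff_tendsto_slope.1 hderiv).mono_left
    (nhdsLT_le_nhdsNE x)).const_add c) ?_
  filter_upwards [Ioo_mem_nhdsLT hax] with t' ht'
  have hne : x - t' ≠ 0 := sub_ne_zero.2 (ne_of_gt ht'.2)
  have hslope : slope (fun s => ∫ τ in x..s, φ τ) x t' = 1 / (x - t') * ∫ τ in t'..x, φ τ := by
    rw [slope_def_field, intervalIntegral.integral_same, sub_zero, intervalIntegral.integral_symm,
      ← neg_sub x t']
    field_simp
  rw [hslope]
  exact (h t' ht').le

theorem lt_of_liminf_slope_le_mul_sub {u β : ℝ → ℝ} {a b c M L : ℝ}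
    (hu : ContinuousOn u (Icc a b))
    (hslope : ∀ x ∈ Ico a b, ∀ r, β x < r → ∃ᶠ z in 𝓝[>] x, slope u x z < r)
    (hua : u a ≤ c) (hcM : c < M) (hL : 0 ≤ L)
    (hβ : ∀ x ∈ Ico a b, c ≤ u x → u x < M → β x ≤ L * (M - u x)) {x : ℝ} (hx : x ∈ Icc a b) :
    u x < M := by
  set g : ℝ → ℝ := fun s => M - (M - c) * Real.exp (-(L + 1) * (s - a)) with hg
  have hgM : ∀ s, g s < M := fun s => sub_lt_self M (mul_pos (sub_pos.2 hcM) (Real.exp_pos _))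
  have hcg : ∀ s, a ≤ s → c ≤ g s := fun s hs => by
    have : Real.exp (-(L + 1) * (s - a)) ≤ 1 := Real.exp_le_one_iff.2 (by nlinarith)
    nlinarith [mul_le_mul_of_nonneg_left this (sub_pos.2 hcM).le]
  have hg' : ∀ s, HasDerivAt g ((L + 1) * (M - g s)) s := fun s => by
    have := ((((hasDerivAt_id s).sub_const a).const_mul (-(L + 1))).exp.const_mul
      (M - c)).const_sub M
    exact this.congr_deriv (by simp only [hg, id]; ring)
  refine (image_le_of_liminf_slope_right_lt_deriv_boundary hu hslope (by simpa [hg] using hua) hg'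
    (fun y hy hyg => ?_) hx).trans_lt (hgM x)
  have := hβ y hy (hyg ▸ hcg y hy.1) (hyg ▸ hgM y)
  rw [hyg] at this
  nlinarith [hgM y]

namespace Volterra

def triangle : Set (ℝ × ℝ) := {p | 0 ≤ p.2 ∧ p.2 ≤ p.1}

theorem continuousOn_slice {α : Type*} [TopologicalSpace α] {K : ℝ → ℝ → α}
    (hK : ContinuousOn (uncurry K) triangle) (t : ℝ) :
    ContinuousOn (K t) (Icc 0 t) :=
  hK.comp (f := fun τ => (t, τ)) (Continuous.continuousOn (by fun_prop)) fun _ hτ => hτ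

variable {E : Type*} [NormedAddCommGroup E]

theorem intervalIntegrable_slice {K : ℝ → ℝ → E} (hK : ContinuousOn (uncurry K) triangle)
    {a b t : ℝ} (ha : 0 ≤ a) (hab : a ≤ b) (hbt : b ≤ t) :
    IntervalIntegrable (K t) volume a b :=
  ((continuousOn_slice hK t).mono
    (by rw [uIcc_of_le hab]; exact Icc_subset_Icc ha hbt)).intervalIntegrable

variable [NormedSpace ℝ E]

theorem hasDerivWithinAt_integral_of_hasDerivAt {K K' : ℝ → ℝ → E}
    (hK : ContinuousOn (uncurry K) triangle) (hK' : ContinuousOn (uncurry K') triangle)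
    (hderiv : ∀ τ t, 0 ≤ τ → τ ≤ t → HasDerivAt (K · τ) (K' t τ) t) {x : ℝ} (hx : 0 ≤ x) :
    HasDerivWithinAt (fun t => ∫ τ in 0..x, K t τ) (∫ τ in 0..x, K' x τ) (Ici x) x := by
  refine hasDerivWithinAt_Ici_of_norm_le fun η hη => ?_
  have hsub : Icc x (x + 1) ×ˢ Icc 0 x ⊆ triangle := fun p hp => ⟨hp.2.1, hp.2.2.trans hp.1.1⟩
  obtain ⟨δ, hδ, hunif⟩ := Metric.uniformContinuousOn_iff.1
    ((isCompact_Icc.prod isCompact_Icc).uniformContinuousOn_of_continuous (hK'.mono hsub))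
    (η / (x + 1)) (by positivity)
  refine ⟨min δ 1, by positivity, fun z hxz hzδ => ?_⟩
  have hpt : ∀ τ ∈ uIoc 0 x, ‖K z τ - K x τ - (z - x) • K' x τ‖ ≤ η / (x + 1) * (z - x) := by
    intro τ hτ
    rw [uIoc_of_le hx] at hτ
    refine norm_sub_sub_smul_le_of_hasDerivAt hxz
      (fun u hu => hderiv τ u hτ.1.le (hτ.2.trans hu.1)) fun u hu => ?_
    have hdist : dist (u, τ) (x, τ) < δ := by
      rw [Prod.dist_eq, dist_self, Real.dist_eq, abs_of_nonneg (by linarith [hu.1])]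
      exact max_lt (by linarith [hu.2, min_le_left δ 1]) hδ
    rw [← dist_eq_norm]
    exact (hunif (u, τ) ⟨⟨hu.1, by linarith [hu.2, min_le_right δ 1]⟩, hτ.1.le, hτ.2⟩
      (x, τ) ⟨⟨le_rfl, by linarith⟩, hτ.1.le, hτ.2⟩ hdist).le
  have hKz := intervalIntegrable_slice hK le_rfl hx hxz
  have hKx := intervalIntegrable_slice hK le_rfl hx le_rfl
  have hK'x := intervalIntegrable_slice hK' le_rfl hx le_rfl
  rw [← intervalIntegral.integral_sub hKz hKx, ← intervalIntegral.integral_smul,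
    ← intervalIntegral.integral_sub (g := fun τ => (z - x) • K' x τ) (hKz.sub hKx)
      (hK'x.smul (z - x))]
  calc _ ≤ η / (x + 1) * (z - x) * |x - 0| :=
        intervalIntegral.norm_integral_le_of_norm_le_const hpt
    _ ≤ η * (z - x) := by
      rw [sub_zero, abs_of_nonneg hx, mul_right_comm, div_mul_eq_mul_div]
      have hzx : 0 ≤ z - x := sub_nonneg.2 hxz
      gcongr
      rw [div_le_iff₀ (by positivity)]
      nlinarith

variable [CompleteSpace E]

theorem hasDerivWithinAt_integral_from_diag {K : ℝ → ℝ → E}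
    (hK : ContinuousOn (uncurry K) triangle) {x : ℝ} (hx : 0 ≤ x) :
    HasDerivWithinAt (fun t => ∫ τ in x..t, K t τ) (K x x) (Ici x) x := by
  refine hasDerivWithinAt_Ici_of_norm_le fun η hη => ?_
  obtain ⟨δ, hδ, hKδ⟩ := Metric.continuousWithinAt_iff.1 (hK (x, x) ⟨hx, le_rfl⟩) η hη
  refine ⟨δ, hδ, fun z hxz hzδ => ?_⟩
  rw [intervalIntegral.integral_same, sub_zero, ← intervalIntegral.integral_const,
    ← intervalIntegral.integral_sub (intervalIntegrable_slice hK hx hxz le_rfl)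
      intervalIntegrable_const]
  have := intervalIntegral.norm_integral_le_of_norm_le_const (a := x) (b := z)
    (f := fun τ => K z τ - K x x) (C := η) fun τ hτ => by
      rw [uIoc_of_le hxz] at hτ
      have hdist : dist (z, τ) (x, x) < δ := by
        rw [Prod.dist_eq, Real.dist_eq, Real.dist_eq, abs_of_nonneg (by linarith),
          abs_of_nonneg (by linarith [hτ.1])]
        exact max_lt (by linarith) (by linarith [hτ.2])
      simpa [dist_eq_norm] using (hKδ ⟨hx.trans hτ.1.le, hτ.2⟩ hdist).le
  rwa [abs_of_nonneg (sub_nonneg.2 hxz)] at this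

theorem hasDerivWithinAt_volterraIntegral {K K' : ℝ → ℝ → E}
    (hK : ContinuousOn (uncurry K) triangle) (hK' : ContinuousOn (uncurry K') triangle)
    (hderiv : ∀ τ t, 0 ≤ τ → τ ≤ t → HasDerivAt (K · τ) (K' t τ) t) {x : ℝ} (hx : 0 ≤ x) :
    HasDerivWithinAt (fun t => ∫ τ in 0..t, K t τ) (K x x + ∫ τ in 0..x, K' x τ) (Ici x) x := by
  rw [add_comm]
  refine ((hasDerivWithinAt_integral_of_hasDerivAt hK hK' hderiv hx).add
    (hasDerivWithinAt_integral_from_diag hK hx)).congr_of_mem (fun t (ht : x ≤ t) => ?_)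
    self_mem_Ici
  exact (intervalIntegral.integral_add_adjacent_intervals
    (intervalIntegrable_slice hK le_rfl hx ht) (intervalIntegrable_slice hK hx ht le_rfl)).symm

theorem continuousOn_integral_slice {E : Type*} [NormedAddCommGroup E] [NormedSpace ℝ E]
    {k : ℝ → ℝ → E} (hk : ContinuousOn (uncurry k) triangle) :
    ContinuousOn (fun s => ∫ σ in 0..s, k s σ) (Ici 0) := by
  -- a retraction of the plane onto the triangle extends `k` continuously
  set r : ℝ × ℝ → ℝ × ℝ := fun p => (max p.1 (max p.2 0), max p.2 0)
  have hkr : Continuous (uncurry k ∘ r) :=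
    hk.comp_continuous (by fun_prop) fun p => ⟨le_max_right _ _, le_max_right _ _⟩
  refine (intervalIntegral.continuous_parametric_intervalIntegral_of_continuous
    (f := fun s σ => uncurry k (r (s, σ))) hkr continuous_id).continuousOn.congr
    fun s hs => intervalIntegral.integral_congr fun σ hσ => ?_
  rw [uIcc_of_le hs] at hσ
  simp [r, max_eq_left hσ.1, max_eq_left hσ.2]

end Volterra

section Matrix

variable {n : ℕ}

theorem continuous_matNorm : Continuous (matNorm : Matrix (Fin n) (Fin n) ℝ → ℝ) :=
  ((LinearMap.toContinuousLinearMap.toLinearMap ∘ₗ Matrix.toLin'.toLinearMap :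
    Matrix (Fin n) (Fin n) ℝ →ₗ[ℝ] (Fin n → ℝ) →L[ℝ] (Fin n → ℝ))
    |>.continuous_of_finiteDimensional).norm

theorem norm_mulVec_le_matNorm (A : Matrix (Fin n) (Fin n) ℝ) (v : Fin n → ℝ) :
    ‖A *ᵥ v‖ ≤ matNorm A * ‖v‖ :=
  (LinearMap.toContinuousLinearMap A.mulVecLin).le_opNorm v

theorem hasDerivAt_mulVec {m k : Type*} [Fintype k] {A : ℝ → Matrix m k ℝ} {A' : Matrix m k ℝ}
    {t : ℝ} (hA : ∀ i j, HasDerivAt (fun s => A s i j) (A' i j) t) (v : k → ℝ) :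
    HasDerivAt (fun s => A s *ᵥ v) (A' *ᵥ v) t := by
  rw [hasDerivAt_pi]
  intro i
  simp only [Matrix.mulVec, dotProduct]
  exact HasDerivAt.fun_sum fun j _ => (hA i j).mul_const (v j)

end Matrix

namespace Volterra

variable {n : ℕ} {B C : ℝ → ℝ → Matrix (Fin n) (Fin n) ℝ} {F F' X : ℝ → Fin n → ℝ}

theorem hasDerivWithinAt_solution (hB : ContinuousOn (uncurry B) triangle)
    (hBt : ∀ τ t : ℝ, 0 ≤ τ → τ ≤ t → ∀ i j, HasDerivAt (fun u => B u τ i j) (C t τ i j) t)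
    (hC : ContinuousOn (uncurry C) triangle) (hF : ∀ t, HasDerivAt F (F' t) t)
    (hXc : ContinuousOn X (Ici 0))
    (hX : ∀ t, 0 ≤ t → X t = (∫ τ in 0..t, B t τ *ᵥ X τ) + F t) {x : ℝ} (hx : 0 ≤ x) :
    HasDerivWithinAt X (B x x *ᵥ X x + (∫ τ in 0..x, C x τ *ᵥ X τ) + F' x) (Ici x) x := by
  have hXT : ContinuousOn (fun p : ℝ × ℝ => X p.2) triangle :=
    hXc.comp continuous_snd.continuousOn fun p hp => hp.1
  have hmulVec : Continuous fun q : Matrix (Fin n) (Fin n) ℝ × (Fin n → ℝ) => q.1 *ᵥ q.2 :=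
    continuous_fst.matrix_mulVec continuous_snd
  have hK := hmulVec.comp_continuousOn (hB.prodMk hXT)
  have hK' := hmulVec.comp_continuousOn (hC.prodMk hXT)
  refine ((hasDerivWithinAt_volterraIntegral (K := fun t τ => B t τ *ᵥ X τ)
    (K' := fun t τ => C t τ *ᵥ X τ) hK hK'
    (fun τ t hτ hτt => hasDerivAt_mulVec (hBt τ t hτ hτt) (X τ)) hx).add
    (hF x).hasDerivWithinAt).congr_of_mem (fun t ht => hX t (hx.trans ht)) self_mem_Ici

theorem norm_integral_mulVec_le (hC : ContinuousOn (uncurry C) triangle) {M x : ℝ} (hx : 0 ≤ x)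
    (hM : ∀ τ ∈ Icc 0 x, ‖X τ‖ ≤ M) :
    ‖∫ τ in 0..x, C x τ *ᵥ X τ‖ ≤ M * ∫ σ in 0..x, matNorm (C x σ) := by
  have hCn : ContinuousOn (uncurry fun s σ => matNorm (C s σ)) triangle :=
    continuous_matNorm.comp_continuousOn hC
  rw [← intervalIntegral.integral_const_mul]
  refine intervalIntegral.norm_integral_le_of_norm_le hx (ae_of_all _ fun τ hτ => ?_)
    ((intervalIntegrable_slice hCn le_rfl hx le_rfl).const_mul M)
  calc ‖C x τ *ᵥ X τ‖ ≤ matNorm (C x τ) * ‖X τ‖ := norm_mulVec_le_matNorm _ _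
    _ ≤ M * matNorm (C x τ) := by
      rw [mul_comm]
      exact mul_le_mul_of_nonneg_right (hM τ (Ioc_subset_Icc_self hτ)) (norm_nonneg _)

theorem eventually_slope_norm_solution_lt [Nonempty (Fin n)]
    (hB : ContinuousOn (uncurry B) triangle)
    (hBt : ∀ τ t : ℝ, 0 ≤ τ → τ ≤ t → ∀ i j, HasDerivAt (fun u => B u τ i j) (C t τ i j) t)
    (hC : ContinuousOn (uncurry C) triangle) (hF : ∀ t, HasDerivAt F (F' t) t)
    (hXc : ContinuousOn X (Ici 0))
    (hX : ∀ t, 0 ≤ t → X t = (∫ τ in 0..t, B t τ *ᵥ X τ) + F t) {M x r : ℝ} (hx : 0 ≤ x)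
    (hM : ∀ τ ∈ Icc 0 x, ‖X τ‖ ≤ M)
    (hr : matLogNorm (B x x) * ‖X x‖ + M * (∫ σ in 0..x, matNorm (C x σ)) + ‖F' x‖ < r) :
    ∀ᶠ z in 𝓝[>] x, slope (fun s => ‖X s‖) x z < r := by
  refine eventually_slope_norm_lt (hasDerivWithinAt_solution hB hBt hC hF hXc hX hx)
    (LinearMap.toContinuousLinearMap (B x x).mulVecLin) (lt_of_le_of_lt ?_ hr)
  rw [LinearMap.coe_toContinuousLinearMap', Matrix.mulVecLin_apply, add_assoc, add_sub_cancel_left,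
    add_assoc]
  exact add_le_add_right ((norm_add_le _ _).trans
    (add_le_add_left (norm_integral_mulVec_le hC hx hM) _)) _

theorem matLogNorm_add_le_zero (hC : ContinuousOn (uncurry C) triangle) (hF'c : Continuous F')
    {ε : ℝ} (hcond : ∀ t' t : ℝ, 0 ≤ t' → t' < t → matLogNorm (B t t) + 1 / (t - t') *
      (∫ τ in t'..t, (∫ σ in 0..τ, matNorm (C τ σ)) + ‖F' τ‖ / ε) < 0) {x : ℝ} (hx : 0 < x) :
    matLogNorm (B x x) + ((∫ σ in 0..x, matNorm (C x σ)) + ‖F' x‖ / ε) ≤ 0 :=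
  add_le_zero_of_forall_average_lt (φ := fun s => (∫ σ in 0..s, matNorm (C s σ)) + ‖F' s‖ / ε)
    (((continuousOn_integral_slice (k := fun s σ => matNorm (C s σ))
      (continuous_matNorm.comp_continuousOn hC)).mono
      Ioi_subset_Ici_self).add (hF'c.norm.div_const ε).continuousOn)
    hx fun t' ht' => hcond t' x ht'.1.le ht'.2

theorem exists_neg_matLogNorm_diag_le [Nonempty (Fin n)] (hB : ContinuousOn (uncurry B) triangle)
    (t : ℝ) : ∃ L, 0 ≤ L ∧ ∀ x ∈ Icc 0 t, -matLogNorm (B x x) ≤ L := by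
  obtain ⟨L, hL⟩ := isCompact_Icc.exists_bound_of_continuousOn (continuous_matNorm.comp_continuousOn
    (hB.comp (f := fun s : ℝ => (s, s)) (Continuous.continuousOn (by fun_prop))
      fun s (hs : s ∈ Icc 0 t) => ⟨hs.1, le_rfl⟩))
  refine ⟨max L 0, le_max_right _ _, fun x hx => ?_⟩
  calc -matLogNorm (B x x) ≤ matNorm (B x x) := neg_le.1 (neg_norm_le_logNorm _)
    _ ≤ max L 0 := (le_abs_self _).trans ((hL x hx).trans (le_max_left _ _))

end Volterra

open Volterra

theorem volterra_integral_stability_general {n : ℕ} (ε : ℝ) (hε : 0 < ε)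
    (B C : ℝ → ℝ → Matrix (Fin n) (Fin n) ℝ)
    (hB : ContinuousOn (fun p : ℝ × ℝ => B p.1 p.2) {p : ℝ × ℝ | 0 ≤ p.2 ∧ p.2 ≤ p.1})
    (hBt : ∀ τ t : ℝ, 0 ≤ τ → τ ≤ t → ∀ i j,
      HasDerivAt (fun u => B u τ i j) (C t τ i j) t)
    (hC : ContinuousOn (fun p : ℝ × ℝ => C p.1 p.2) {p : ℝ × ℝ | 0 ≤ p.2 ∧ p.2 ≤ p.1})
    (F F' : ℝ → (Fin n → ℝ))
    (hF : ∀ t : ℝ, HasDerivAt F (F' t) t) (hF'c : Continuous F')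
    (hF0 : F 0 = 0)
    (hcond : ∀ t' t : ℝ, 0 ≤ t' → t' < t →
      matLogNorm (B t t) + (1 / (t - t')) *
        (∫ τ in t'..t, (∫ σ in (0 : ℝ)..τ, matNorm (C τ σ)) + ‖F' τ‖ / ε) < 0)
    (X : ℝ → (Fin n → ℝ)) (hXc : ContinuousOn X (Set.Ici 0))
    (hX : ∀ t : ℝ, 0 ≤ t → X t = (∫ τ in (0 : ℝ)..t, (B t τ).mulVec (X τ)) + F t) :
    ∀ t : ℝ, 0 ≤ t → ‖X t‖ ≤ ε := by
  intro t ht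
  rcases isEmpty_or_nonempty (Fin n) with hn | hn
  · simp [Subsingleton.elim (X t) 0, hε.le]
  by_contra! hXt
  have hu : ContinuousOn (fun s => ‖X s‖) (Icc 0 t) := (hXc.mono Icc_subset_Ici_self).norm
  obtain ⟨w, hw, hwmax⟩ := isCompact_Icc.exists_isMaxOn (nonempty_Icc.2 ht) hu
  have hεM : ε < ‖X w‖ := hXt.trans_le (hwmax ⟨ht, le_rfl⟩)
  have hX0 : ‖X 0‖ = 0 := by simp [hX 0 le_rfl, hF0]
  obtain ⟨L, hL0, hL⟩ := exists_neg_matLogNorm_diag_le hB t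
  refine (lt_of_liminf_slope_le_mul_sub hu (fun x hx r hr =>
    (eventually_slope_norm_solution_lt hB hBt hC hF hXc hX hx.1
      (fun τ hτ => hwmax ⟨hτ.1, hτ.2.trans hx.2.le⟩) hr).frequently)
    (hX0.trans_le (by positivity)) (half_lt_self (hε.trans hεM)) hL0
    (fun x hx hcx hxM => ?_) hw).false
  have hx0 : 0 < x := hx.1.lt_of_ne fun h => by subst h; linarith [hε.trans hεM]
  have hψ := matLogNorm_add_le_zero hC hF'c hcond hx0
  have hq : 0 ≤ ‖F' x‖ / ε := by positivity
  have hf : ‖F' x‖ = ε * (‖F' x‖ / ε) := by field_simp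
  nlinarith [mul_le_mul_of_nonneg_right (hL x ⟨hx.1, hx.2.le⟩) (sub_nonneg.2 hxM.le),
    mul_nonneg (sub_nonneg.2 hεM.le) hq, mul_le_mul_of_nonneg_left (by linarith :
      (∫ σ in (0 : ℝ)..x, matNorm (C x σ)) ≤ -matLogNorm (B x x) - ‖F' x‖ / ε) (norm_nonneg (X w))]

/-- Theorem 1: stability of the Volterra integral system with respect to right-hand-side
perturbations. Let `ε > 0`, `B(t, τ)` be `C¹` in `t` with `C(t, τ) = ∂ₜB(t, τ)`, and
`F ∈ C¹` with `F(0) = 0` and `sup_{t ≥ 0} ‖F'(t)‖ ≤ ε`. If for all `0 ≤ t' < t` we have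
`Λ(B(t,t)) + (1/(t−t')) ∫_{t'}^{t} ψ*(τ) dτ < 0` where
`ψ*(s) = ∫₀ˢ ‖C(s,τ)‖ dτ + ‖F'(s)‖/ε`, then every continuous solution `X` of
`X(t) = ∫₀ᵗ B(t,τ) X(τ) dτ + F(t)` satisfies `‖X(t)‖ ≤ ε` for all `t ≥ 0`. -/
theorem volterra_integral_stability {n : ℕ} (ε : ℝ) (hε : 0 < ε)
    (B C : ℝ → ℝ → Matrix (Fin n) (Fin n) ℝ)
    (hB : ContinuousOn (fun p : ℝ × ℝ => B p.1 p.2) {p : ℝ × ℝ | 0 ≤ p.2 ∧ p.2 ≤ p.1})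
    (hBt : ∀ τ t : ℝ, 0 ≤ τ → τ ≤ t → ∀ i j,
      HasDerivAt (fun u => B u τ i j) (C t τ i j) t)
    (hC : ContinuousOn (fun p : ℝ × ℝ => C p.1 p.2) {p : ℝ × ℝ | 0 ≤ p.2 ∧ p.2 ≤ p.1})
    (F F' : ℝ → (Fin n → ℝ))
    (hF : ∀ t : ℝ, HasDerivAt F (F' t) t) (hF'c : Continuous F')
    (hF0 : F 0 = 0) (hF'bound : ∀ t : ℝ, 0 ≤ t → ‖F' t‖ ≤ ε)
    (hcond : ∀ t' t : ℝ, 0 ≤ t' → t' < t →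
      matLogNorm (B t t) + (1 / (t - t')) *
        (∫ τ in t'..t, (∫ σ in (0 : ℝ)..τ, matNorm (C τ σ)) + ‖F' τ‖ / ε) < 0)
    (X : ℝ → (Fin n → ℝ)) (hXc : ContinuousOn X (Set.Ici 0))
    (hX : ∀ t : ℝ, 0 ≤ t → X t = (∫ τ in (0 : ℝ)..t, (B t τ).mulVec (X τ)) + F t) :
    ∀ t : ℝ, 0 ≤ t → ‖X t‖ ≤ ε :=
  volterra_integral_stability_general ε hε B C hB hBt hC F F' hF hF'c hF0 hcond X hXc hX
end

section
/- Grönwall-type decay estimate for Volterra integro-differential equations: if X solves X'(t) = A(t)X(t) + ∫₀ᵗ B(t,τ)X(τ)dτ on [0, T], ‖X‖ is nondecreasing on [t*, t**] ⊆ [0, T], and g(s) = ‖A(s) − A(t*)‖ + ∫₀ˢ‖B(s,τ)‖dτ, then ‖X(t)‖ ≤ exp(Λ(A(t*))(t − t*) + ∫_{t*}^{t} g(s) ds)·‖X(t*)‖ for all t ∈ [t*, t**]. -/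
open scoped Topology
open Filter Set

lemma matNorm_mulVec {n : ℕ} (A : Matrix (Fin n) (Fin n) ℝ) (v : Fin n → ℝ) :
    ‖A.mulVec v‖ ≤ matNorm A * ‖v‖ := by
  have := (LinearMap.toContinuousLinearMap A.mulVecLin).le_opNorm v
  simpa [matNorm, Matrix.mulVecLin_apply] using this

lemma matNorm_nonneg {n : ℕ} (A : Matrix (Fin n) (Fin n) ℝ) : 0 ≤ matNorm A :=
  norm_nonneg _

lemma matNorm_continuous {n : ℕ} : Continuous (matNorm (n := n)) := by
  let L : Matrix (Fin n) (Fin n) ℝ →ₗ[ℝ] ((Fin n → ℝ) →L[ℝ] (Fin n → ℝ)) :=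
    { toFun := fun A => LinearMap.toContinuousLinearMap A.mulVecLin
      map_add' := fun A B => by
        ext v
        simp [Matrix.add_mulVec]
      map_smul' := fun c A => by
        ext v
        simp [Matrix.smul_mulVec] }
  exact continuous_norm.comp L.continuous_of_finiteDimensional

lemma logNorm_bound {E : Type*} [NormedAddCommGroup E] [NormedSpace ℝ E]
    (K : E →L[ℝ] E) {ε : ℝ} (hε : 0 < ε) :
    ∃ h₀ > 0, ∀ h : ℝ, 0 < h → h ≤ h₀ →
      ‖ContinuousLinearMap.id ℝ E + h • K‖ ≤ 1 + h * (logNorm K + ε) := by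
  set S := (fun h : ℝ => (‖ContinuousLinearMap.id ℝ E + h • K‖ - 1) / h) '' Set.Ioi 0 with hS
  have hne : S.Nonempty := ⟨_, ⟨1, mem_Ioi.2 one_pos, rfl⟩⟩
  have hlt : sInf S < logNorm K + ε := by
    have : logNorm K = sInf S := rfl
    linarith
  obtain ⟨y, ⟨h₀, h₀pos, rfl⟩, hy⟩ := exists_lt_of_csInf_lt hne hlt
  rw [mem_Ioi] at h₀pos
  refine ⟨h₀, h₀pos, fun h hh hh₀ => ?_⟩
  have hq : ‖ContinuousLinearMap.id ℝ E + h₀ • K‖ ≤ 1 + h₀ * (logNorm K + ε) := by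
    rw [div_lt_iff₀ h₀pos] at hy
    linarith
  have hdecomp : ContinuousLinearMap.id ℝ E + h • K
      = (1 - h / h₀) • ContinuousLinearMap.id ℝ E
        + (h / h₀) • (ContinuousLinearMap.id ℝ E + h₀ • K) := by
    have e : h / h₀ * h₀ = h := div_mul_cancel₀ h h₀pos.ne'
    rw [smul_add, smul_smul, e, sub_smul, one_smul]
    abel
  have hnn1 : (0:ℝ) ≤ 1 - h / h₀ := by
    rw [sub_nonneg, div_le_one h₀pos]; exact hh₀
  have hnn2 : (0:ℝ) ≤ h / h₀ := le_of_lt (div_pos hh h₀pos)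
  calc ‖ContinuousLinearMap.id ℝ E + h • K‖
      ≤ ‖(1 - h / h₀) • ContinuousLinearMap.id ℝ E‖
        + ‖(h / h₀) • (ContinuousLinearMap.id ℝ E + h₀ • K)‖ := by
        rw [hdecomp]; exact norm_add_le _ _
    _ ≤ (1 - h / h₀) * 1 + (h / h₀) * (1 + h₀ * (logNorm K + ε)) := by
        refine add_le_add ?_ ?_
        · calc ‖(1 - h / h₀) • ContinuousLinearMap.id ℝ E‖
              ≤ |1 - h / h₀| * ‖ContinuousLinearMap.id ℝ E‖ := by
                simpa using norm_smul_le (1 - h / h₀) (ContinuousLinearMap.id ℝ E)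
            _ ≤ (1 - h / h₀) * 1 := by
                rw [abs_of_nonneg hnn1]
                exact mul_le_mul_of_nonneg_left ContinuousLinearMap.norm_id_le hnn1
        · calc ‖(h / h₀) • (ContinuousLinearMap.id ℝ E + h₀ • K)‖
              ≤ |h / h₀| * ‖ContinuousLinearMap.id ℝ E + h₀ • K‖ := by
                simpa [abs_div] using norm_smul_le (h / h₀) (ContinuousLinearMap.id ℝ E + h₀ • K)
            _ ≤ (h / h₀) * (1 + h₀ * (logNorm K + ε)) := by
                rw [abs_of_nonneg hnn2]
                exact mul_le_mul_of_nonneg_left hq hnn2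
    _ = 1 + (h / h₀ * h₀) * (logNorm K + ε) := by ring
    _ = 1 + h * (logNorm K + ε) := by rw [div_mul_cancel₀ h h₀pos.ne']

set_option maxHeartbeats 1000000

/-- Grönwall-type decay estimate for Volterra integro-differential equations: if `X` solves
`X'(t) = A(t) X(t) + ∫₀ᵗ B(t,τ) X(τ) dτ` on `[0, T]`, earlier values of `‖X‖` are dominated
on `[t*, t**] ⊆ [0, T]`, and `g(s) = ‖A(s) − A(t*)‖ + ∫₀ˢ ‖B(s,τ)‖ dτ`, then
`‖X(t)‖ ≤ exp(Λ(A(t*))(t − t*) + ∫_{t*}^{t} g(s) ds) · ‖X(t*)‖` on `[t*, t**]`. -/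
theorem gronwall_decay_volterra {n : ℕ} (T tstar tss : ℝ)
    (h0 : 0 ≤ tstar) (h1 : tstar ≤ tss) (h2 : tss ≤ T)
    (A : ℝ → Matrix (Fin n) (Fin n) ℝ) (hA : ContinuousOn A (Set.Icc 0 T))
    (B : ℝ → ℝ → Matrix (Fin n) (Fin n) ℝ)
    (hB : ContinuousOn (fun p : ℝ × ℝ => B p.1 p.2)
      {p : ℝ × ℝ | 0 ≤ p.2 ∧ p.2 ≤ p.1 ∧ p.1 ≤ T})
    (X : ℝ → (Fin n → ℝ))
    (hX : ∀ t ∈ Set.Icc (0 : ℝ) T,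
      HasDerivAt X ((A t).mulVec (X t) + ∫ τ in (0 : ℝ)..t, (B t τ).mulVec (X τ)) t)
    (hmono : ∀ s ∈ Set.Icc tstar tss, ∀ τ ∈ Set.Icc (0 : ℝ) s, ‖X τ‖ ≤ ‖X s‖) :
    ∀ t ∈ Set.Icc tstar tss,
      ‖X t‖ ≤ Real.exp (matLogNorm (A tstar) * (t - tstar) +
          ∫ s in tstar..t, matNorm (A s - A tstar) + ∫ τ in (0 : ℝ)..s, matNorm (B s τ)) *
        ‖X tstar‖ := by
  have hT : (0:ℝ) ≤ T := h0.trans (h1.trans h2)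
  have hXc : ContinuousOn X (Set.Icc 0 T) := fun s hs =>
    (hX s hs).continuousAt.continuousWithinAt
  -- clamping map
  set σ : ℝ → ℝ := fun s => max 0 (min s T) with hσdef
  have hσc : Continuous σ := continuous_const.max (continuous_id.min continuous_const)
  have hσmem : ∀ s, σ s ∈ Set.Icc (0:ℝ) T := fun s =>
    ⟨le_max_left _ _, max_le hT (min_le_right _ _)⟩
  have hσeq : ∀ s ∈ Set.Icc (0:ℝ) T, σ s = s := fun s hs => by
    simp only [hσdef]; rw [min_eq_left hs.2, max_eq_right hs.1]
  -- extended A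
  set Ae : ℝ → Matrix (Fin n) (Fin n) ℝ := fun s => A (σ s) with hAedef
  have hAec : Continuous Ae := hA.comp_continuous hσc hσmem
  have hAeq : ∀ s ∈ Set.Icc (0:ℝ) T, Ae s = A s := fun s hs => by
    simp only [hAedef]; rw [hσeq s hs]
  -- extended B
  set Be : ℝ → ℝ → Matrix (Fin n) (Fin n) ℝ :=
    fun s τ => B (σ s) (max 0 (min τ (σ s))) with hBedef
  have hBec : Continuous fun p : ℝ × ℝ => Be p.1 p.2 := by
    have heq : (fun p : ℝ × ℝ => Be p.1 p.2)
        = (fun p : ℝ × ℝ => B p.1 p.2) ∘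
          (fun p : ℝ × ℝ => (σ p.1, max 0 (min p.2 (σ p.1)))) := rfl
    rw [heq]
    apply hB.comp_continuous
    · exact (hσc.comp continuous_fst).prodMk
        (continuous_const.max (continuous_snd.min (hσc.comp continuous_fst)))
    · intro p
      refine ⟨le_max_left _ _, max_le (hσmem p.1).1 (min_le_right _ _), (hσmem p.1).2⟩
  have hBeq : ∀ s τ : ℝ, 0 ≤ τ → τ ≤ s → s ≤ T → Be s τ = B s τ := by
    intro s τ hτ0 hτs hsT
    have hs : σ s = s := hσeq s ⟨hτ0.trans hτs, hsT⟩
    simp only [hBedef, hs]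
    rw [min_eq_left hτs, max_eq_right hτ0]
  -- the continuous coefficient function
  set φ : ℝ → ℝ → ℝ := fun s τ => matNorm (Be s τ) with hφdef
  have hφc : Continuous fun p : ℝ × ℝ => φ p.1 p.2 := matNorm_continuous.comp hBec
  set g : ℝ → ℝ := fun s => matNorm (Ae s - A tstar) + ∫ τ in (0:ℝ)..s, φ s τ with hgdef
  have hgc : Continuous g := by
    refine (matNorm_continuous.comp (hAec.sub continuous_const)).add ?_
    exact intervalIntegral.continuous_parametric_intervalIntegral_of_continuous
      (f := φ) hφc continuous_id
  set G : ℝ → ℝ := fun u => ∫ s in tstar..u, g s with hGdef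
  have hG : ∀ x, HasDerivAt G (g x) x := fun x =>
    (hgc.integral_hasStrictDerivAt tstar x).hasDerivAt
  have hGc : Continuous G := continuous_iff_continuousAt.mpr fun x => (hG x).continuousAt
  set Λ : ℝ := matLogNorm (A tstar) with hΛdef
  intro t ht
  -- it suffices to prove the estimate with every ε > 0
  have key : ∀ ε : ℝ, 0 < ε →
      ‖X t‖ ≤ (‖X tstar‖ + ε) * Real.exp ((Λ + 2*ε) * (t - tstar) + G t) := by
    intro ε hε
    obtain ⟨h₀, h₀pos, hOp⟩ :=
      logNorm_bound (LinearMap.toContinuousLinearMap (A tstar).mulVecLin) hε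
    set K : (Fin n → ℝ) →L[ℝ] (Fin n → ℝ) :=
      LinearMap.toContinuousLinearMap (A tstar).mulVecLin with hKdef
    set f : ℝ → ℝ := fun u => ‖X u‖ with hfdef
    set f' : ℝ → ℝ := fun u => (Λ + ε + g u) * ‖X u‖ with hf'def
    set Bd : ℝ → ℝ := fun u =>
      (‖X tstar‖ + ε) * Real.exp ((Λ + 2*ε) * (u - tstar) + G u) with hBddef
    set Bd' : ℝ → ℝ := fun u => (Λ + 2*ε + g u) * Bd u with hBd'def
    have hBdpos : ∀ u, 0 < Bd u := fun u =>
      mul_pos (by positivity) (Real.exp_pos _)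
    have hfc : ContinuousOn f (Set.Icc tstar tss) :=
      continuous_norm.comp_continuousOn (hXc.mono (Set.Icc_subset_Icc h0 h2))
    have hfa : f tstar ≤ Bd tstar := by
      have : G tstar = 0 := intervalIntegral.integral_same
      simp only [hfdef, hBddef, this, sub_self, mul_zero, zero_add, Real.exp_zero, mul_one]
      linarith
    have hBdc : ContinuousOn Bd (Set.Icc tstar tss) := by
      apply Continuous.continuousOn
      exact continuous_const.mul (Real.continuous_exp.comp
        ((continuous_const.mul (continuous_id.sub continuous_const)).add hGc))
    have hBd' : ∀ u ∈ Set.Ico tstar tss, HasDerivWithinAt Bd (Bd' u) (Set.Ici u) u := by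
      intro u _
      have h1' : HasDerivAt (fun v => (Λ + 2*ε) * (v - tstar) + G v) (Λ + 2*ε + g u) u := by
        have := (((hasDerivAt_id u).sub_const tstar).const_mul (Λ + 2*ε)).add (hG u)
        refine this.congr_deriv ?_
        ring
      have h2' : HasDerivAt Bd ((‖X tstar‖ + ε) *
          (Real.exp ((Λ + 2*ε) * (u - tstar) + G u) * (Λ + 2*ε + g u))) u :=
        (h1'.exp).const_mul _
      have : Bd' u = (‖X tstar‖ + ε) *
          (Real.exp ((Λ + 2*ε) * (u - tstar) + G u) * (Λ + 2*ε + g u)) := by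
        simp only [hBd'def, hBddef]; ring
      rw [this]
      exact h2'.hasDerivWithinAt
    have hbound : ∀ u ∈ Set.Ico tstar tss, f u = Bd u → f' u < Bd' u := by
      intro u _ hu
      simp only [hf'def, hBd'def]
      rw [show ‖X u‖ = Bd u from hu]
      have := hBdpos u
      nlinarith
    -- the slope estimate
    have hf' : ∀ x ∈ Set.Ico tstar tss, ∀ r, f' x < r →
        ∃ᶠ z in 𝓝[>] x, slope f x z < r := by
      intro x hx r hr
      have hx0 : (0:ℝ) ≤ x := h0.trans hx.1
      have hxT : x ∈ Set.Icc (0:ℝ) T := ⟨hx0, hx.2.le.trans h2⟩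
      have hxs : x ∈ Set.Icc tstar tss := ⟨hx.1, hx.2.le⟩
      have hD := hX x hxT
      set D : Fin n → ℝ := (A x).mulVec (X x) + ∫ τ in (0:ℝ)..x, (B x τ).mulVec (X τ)
        with hDdef
      set W : Fin n → ℝ := (A x - A tstar).mulVec (X x)
        + ∫ τ in (0:ℝ)..x, (B x τ).mulVec (X τ) with hWdef
      -- integrability facts on [0, x]
      have hXcx : ContinuousOn X (Set.Icc 0 x) := hXc.mono (Set.Icc_subset_Icc le_rfl hxT.2)
      have hBcx : ContinuousOn (fun τ => B x τ) (Set.Icc 0 x) := by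
        have hc : Continuous fun τ => Be x τ :=
          hBec.comp (continuous_const.prodMk continuous_id)
        refine (hc.continuousOn).congr ?_
        intro τ hτ
        exact (hBeq x τ hτ.1 hτ.2 hxT.2).symm
      have hmv : Continuous fun p : Matrix (Fin n) (Fin n) ℝ × (Fin n → ℝ) =>
          p.1.mulVec p.2 := Continuous.matrix_mulVec continuous_fst continuous_snd
      have hIcont : ContinuousOn (fun τ => (B x τ).mulVec (X τ)) (Set.Icc 0 x) :=
        hmv.comp_continuousOn (hBcx.prodMk hXcx)
      have hInt1 : IntervalIntegrable (fun τ => (B x τ).mulVec (X τ)) MeasureTheory.volume 0 x :=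
        (hIcont.mono (by rw [Set.uIcc_of_le hx0])).intervalIntegrable
      have hφcx : ContinuousOn (fun τ => φ x τ) (Set.Icc 0 x) :=
        (hφc.comp (continuous_const.prodMk continuous_id)).continuousOn
      have hInt2 : IntervalIntegrable (fun τ => φ x τ * ‖X x‖) MeasureTheory.volume 0 x :=
        ((hφcx.mul continuousOn_const).mono (by rw [Set.uIcc_of_le hx0])).intervalIntegrable
      -- bound on W
      have hWle : ‖W‖ ≤ g x * ‖X x‖ := by
        have hI : ‖∫ τ in (0:ℝ)..x, (B x τ).mulVec (X τ)‖
            ≤ (∫ τ in (0:ℝ)..x, φ x τ) * ‖X x‖ := by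
          calc ‖∫ τ in (0:ℝ)..x, (B x τ).mulVec (X τ)‖
              ≤ ∫ τ in (0:ℝ)..x, ‖(B x τ).mulVec (X τ)‖ :=
                intervalIntegral.norm_integral_le_integral_norm hx0
            _ ≤ ∫ τ in (0:ℝ)..x, φ x τ * ‖X x‖ := by
                apply intervalIntegral.integral_mono_on hx0 hInt1.norm hInt2
                intro τ hτ
                calc ‖(B x τ).mulVec (X τ)‖ ≤ matNorm (B x τ) * ‖X τ‖ :=
                      matNorm_mulVec _ _
                  _ ≤ φ x τ * ‖X x‖ := by
                      rw [hφdef]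
                      simp only
                      rw [hBeq x τ hτ.1 hτ.2 hxT.2]
                      exact mul_le_mul_of_nonneg_left (hmono x hxs τ hτ)
                        (matNorm_nonneg _) |>.trans
                        (mul_le_mul_of_nonneg_right le_rfl (norm_nonneg _))
            _ = (∫ τ in (0:ℝ)..x, φ x τ) * ‖X x‖ :=
                intervalIntegral.integral_mul_const _ _
        have hAx : matNorm (A x - A tstar) = matNorm (Ae x - A tstar) := by
          rw [hAeq x hxT]
        calc ‖W‖ ≤ ‖(A x - A tstar).mulVec (X x)‖
              + ‖∫ τ in (0:ℝ)..x, (B x τ).mulVec (X τ)‖ := norm_add_le _ _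
          _ ≤ matNorm (A x - A tstar) * ‖X x‖ + (∫ τ in (0:ℝ)..x, φ x τ) * ‖X x‖ :=
              add_le_add (matNorm_mulVec _ _) hI
          _ = g x * ‖X x‖ := by rw [hgdef]; simp only [hAx]; ring
      -- the little-o estimate
      set δ : ℝ := r - f' x with hδdef
      have hδpos : 0 < δ := sub_pos.2 hr
      have hlo := hasDerivAt_iff_isLittleO.mp hD
      have hev1 : ∀ᶠ z in 𝓝[>] x, ‖X z - X x - (z - x) • D‖ ≤ δ/2 * ‖z - x‖ :=
        nhdsWithin_le_nhds (hlo.def (by positivity))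
      have hev2 : ∀ᶠ z in 𝓝[>] x, z ∈ Set.Ioc x (x + h₀) :=
        Ioc_mem_nhdsGT_of_mem ⟨le_rfl, by linarith⟩
      apply Filter.Eventually.frequently
      filter_upwards [hev1, hev2] with z hz1 hz2
      have hzpos : 0 < z - x := sub_pos.2 hz2.1
      have hzh₀ : z - x ≤ h₀ := by linarith [hz2.2]
      -- decompose X x + (z - x) • D
      have hdecomp : X x + (z - x) • D
          = (ContinuousLinearMap.id ℝ (Fin n → ℝ) + (z - x) • K) (X x) + (z - x) • W := by
        simp only [ContinuousLinearMap.add_apply, ContinuousLinearMap.coe_id', id_eq,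
          ContinuousLinearMap.coe_smul', Pi.smul_apply, hKdef,
          LinearMap.coe_toContinuousLinearMap', Matrix.mulVecLin_apply, hDdef, hWdef,
          Matrix.sub_mulVec, smul_add, smul_sub]
        abel
      have hXz : ‖X z‖ ≤ ‖X x + (z - x) • D‖ + δ/2 * (z - x) := by
        have h1' : ‖X z - (X x + (z - x) • D)‖ ≤ δ/2 * (z - x) := by
          have : X z - (X x + (z - x) • D) = X z - X x - (z - x) • D := by abel
          rw [this]
          calc ‖X z - X x - (z - x) • D‖ ≤ δ/2 * ‖z - x‖ := hz1
            _ = δ/2 * (z - x) := by rw [Real.norm_eq_abs, abs_of_pos hzpos]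
        calc ‖X z‖ = ‖(X x + (z - x) • D) + (X z - (X x + (z - x) • D))‖ := by
              congr 1; abel
          _ ≤ ‖X x + (z - x) • D‖ + ‖X z - (X x + (z - x) • D)‖ := norm_add_le _ _
          _ ≤ ‖X x + (z - x) • D‖ + δ/2 * (z - x) := by linarith
      have hmain : ‖X x + (z - x) • D‖
          ≤ (1 + (z - x) * (Λ + ε)) * ‖X x‖ + (z - x) * (g x * ‖X x‖) := by
        rw [hdecomp]
        calc ‖(ContinuousLinearMap.id ℝ (Fin n → ℝ) + (z - x) • K) (X x) + (z - x) • W‖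
            ≤ ‖(ContinuousLinearMap.id ℝ (Fin n → ℝ) + (z - x) • K) (X x)‖
              + ‖(z - x) • W‖ := norm_add_le _ _
          _ ≤ ‖ContinuousLinearMap.id ℝ (Fin n → ℝ) + (z - x) • K‖ * ‖X x‖
              + (z - x) * ‖W‖ := by
              refine add_le_add (ContinuousLinearMap.le_opNorm _ _) ?_
              rw [norm_smul, Real.norm_eq_abs, abs_of_pos hzpos]
          _ ≤ (1 + (z - x) * (Λ + ε)) * ‖X x‖ + (z - x) * (g x * ‖X x‖) := by
              refine add_le_add ?_ (mul_le_mul_of_nonneg_left hWle hzpos.le)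
              refine mul_le_mul_of_nonneg_right ?_ (norm_nonneg _)
              exact hOp (z - x) hzpos hzh₀
      -- conclude about the slope
      rw [slope_def_field, div_lt_iff₀ hzpos]
      have hfx : f' x = (Λ + ε + g x) * ‖X x‖ := rfl
      have hrr : f' x + δ/2 < r := by rw [hδdef]; linarith
      have := mul_lt_mul_of_pos_right hrr hzpos
      simp only [hfdef]
      nlinarith [hXz, hmain, norm_nonneg (X x)]
    have := image_le_of_liminf_slope_right_lt_deriv_boundary' hfc hf' hfa hBdc hBd' hbound ht
    simpa only [hBddef] using this
  -- pass to the limit ε → 0⁺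
  have hlim : Filter.Tendsto
      (fun ε : ℝ => (‖X tstar‖ + ε) * Real.exp ((Λ + 2*ε) * (t - tstar) + G t))
      (𝓝[>] 0) (𝓝 (Real.exp (Λ * (t - tstar) + G t) * ‖X tstar‖)) := by
    have hc : Continuous
        (fun ε : ℝ => (‖X tstar‖ + ε) * Real.exp ((Λ + 2*ε) * (t - tstar) + G t)) :=
      (continuous_const.add continuous_id).mul (Real.continuous_exp.comp
        (((continuous_const.add (continuous_const.mul continuous_id)).mul
          continuous_const).add continuous_const))
    have := (hc.tendsto 0).mono_left (nhdsWithin_le_nhds (s := Set.Ioi (0:ℝ)))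
    simpa [mul_comm] using this
  have hfinal : ‖X t‖ ≤ Real.exp (Λ * (t - tstar) + G t) * ‖X tstar‖ := by
    refine ge_of_tendsto hlim ?_
    filter_upwards [self_mem_nhdsWithin] with ε hε
    exact key ε hε
  -- identify G t with the original integral
  have hGt : G t = ∫ s in tstar..t, matNorm (A s - A tstar)
      + ∫ τ in (0:ℝ)..s, matNorm (B s τ) := by
    apply intervalIntegral.integral_congr
    intro s hs
    rw [Set.uIcc_of_le ht.1] at hs
    have hsT : s ∈ Set.Icc (0:ℝ) T := ⟨h0.trans hs.1, hs.2.trans (ht.2.trans h2)⟩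
    have hs0 : (0:ℝ) ≤ s := hsT.1
    simp only [hgdef]
    congr 1
    · rw [hAeq s hsT]
    · apply intervalIntegral.integral_congr
      intro τ hτ
      rw [Set.uIcc_of_le hs0] at hτ
      simp only [hφdef]
      rw [hBeq s τ hτ.1 hτ.2 hsT.2]
  rw [hGt] at hfinal
  exact hfinal
end
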